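/- Let 0 < α < β, let g : [α,β] → ℂ be real-valued and continuously differentiable with g(α) = 1 and g(β) = −1, and set M_g = max_{[α,β]} |g| and M_{g′} = max_{[α,β]} |g′|. Let λ ∈ ℝ, c₀ > 0, let S : [α,β] → ℂ be continuously differentiable, and let v, z, f : [α,β] → ℂ be continuous with i λ v(x) − S′(x) + c₀ z(x) = f(x) for all x ∈ (α,β). Then |S(β)|² + |S(α)|² ≤ M_{g′} ∫_α^β |S|² dx + 2|λ| M_g (∫_α^β |S|² dx)^{1/2} (∫_α^β |v|² dx)^{1/2} + 2 c₀ M_g (∫_α^β |S|² dx)^{1/2} (∫_α^β |z|² dx)^{1/2} + 2 M_g (∫_α^β |S|² dx)^{1/2} (∫_α^β |f|² dx)^{1/2}. -/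

import Mathlib

/-! Integrating `(g ‖S‖²)' = g' ‖S‖² + 2 g Re (S̄ S')` over `[α, β]` and using `g α = 1`,
`g β = -1` gives `‖S β‖² + ‖S α‖² = -∫ (g' ‖S‖² + 2 g Re (S̄ S'))`. The resolvent equation bounds
`‖S'‖` pointwise by `|λ| ‖v‖ + c₀ ‖z‖ + ‖f‖`, and Cauchy–Schwarz turns each resulting
`∫ ‖S‖ ‖·‖` into a product of `L²` norms. -/

open MeasureTheory Complex Set

theorem ContinuousOn.memLp_restrict_Ioc {E : Type*} [NormedAddCommGroup E] {a b : ℝ}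
    {u : ℝ → E} (hu : ContinuousOn u (Icc a b)) (p : ENNReal) :
    MemLp u p (volume.restrict (Ioc a b)) := by
  obtain ⟨C, hC⟩ := isCompact_Icc.exists_bound_of_continuousOn hu
  exact .of_bound ((hu.mono Ioc_subset_Icc_self).aestronglyMeasurable measurableSet_Ioc) C
    ((ae_restrict_iff' measurableSet_Ioc).2 (.of_forall fun x hx => hC x (Ioc_subset_Icc_self hx)))

theorem intervalIntegral_norm_mul_norm_le {E F : Type*} [NormedAddCommGroup E]
    [NormedAddCommGroup F] {a b : ℝ} (hab : a ≤ b) {u : ℝ → E} {w : ℝ → F}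
    (hu : ContinuousOn u (Icc a b)) (hw : ContinuousOn w (Icc a b)) :
    ∫ x in a..b, ‖u x‖ * ‖w x‖ ≤
      √(∫ x in a..b, ‖u x‖ ^ 2) * √(∫ x in a..b, ‖w x‖ ^ 2) := by
  have hHolder := integral_mul_le_Lp_mul_Lq_of_nonneg Real.HolderConjugate.two_two
    (.of_forall fun x => norm_nonneg (u x)) (.of_forall fun x => norm_nonneg (w x))
    (hu.norm.memLp_restrict_Ioc _) (hw.norm.memLp_restrict_Ioc _)
  simp only [Real.rpow_two, ← Real.sqrt_eq_rpow] at hHolder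
  simpa only [intervalIntegral.integral_of_le hab] using hHolder

theorem norm_le_of_resolvent_eq {lam c₀ : ℝ} (hc₀ : 0 ≤ c₀) {v s z f : ℂ}
    (h : I * lam * v - s + c₀ * z = f) : ‖s‖ ≤ |lam| * ‖v‖ + c₀ * ‖z‖ + ‖f‖ := by
  rw [show s = I * lam * v + c₀ * z - f by linear_combination -h]
  calc ‖I * lam * v + c₀ * z - f‖ ≤ ‖I * lam * v‖ + ‖(c₀ : ℂ) * z‖ + ‖f‖ :=
        (norm_sub_le _ _).trans (by gcongr; exact norm_add_le _ _)
    _ = |lam| * ‖v‖ + c₀ * ‖z‖ + ‖f‖ := by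
        simp [Complex.norm_real, abs_of_nonneg hc₀]

theorem norm_sq_add_norm_sq_le_of_multiplier {E : Type*} [NormedAddCommGroup E]
    [InnerProductSpace ℝ E] {a b Mg Mg' : ℝ} (hab : a ≤ b) {g g' : ℝ → ℝ} {S S' : ℝ → E}
    (hg : ∀ x ∈ Icc a b, HasDerivAt g (g' x) x) (hg'c : ContinuousOn g' (Icc a b))
    (hga : g a = 1) (hgb : g b = -1)
    (hMg : ∀ x ∈ Icc a b, |g x| ≤ Mg) (hMg' : ∀ x ∈ Icc a b, |g' x| ≤ Mg')
    (hS : ∀ x ∈ Icc a b, HasDerivAt S (S' x) x) (hS'c : ContinuousOn S' (Icc a b)) :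
    ‖S b‖ ^ 2 + ‖S a‖ ^ 2 ≤
      Mg' * (∫ x in a..b, ‖S x‖ ^ 2) + 2 * Mg * ∫ x in a..b, ‖S x‖ * ‖S' x‖ := by
  have hSc : ContinuousOn S (Icc a b) := fun x hx => (hS x hx).continuousAt.continuousWithinAt
  have hgc : ContinuousOn g (Icc a b) := fun x hx => (hg x hx).continuousAt.continuousWithinAt
  set G : ℝ → ℝ := fun x => g' x * ‖S x‖ ^ 2 + g x * (2 * inner ℝ (S x) (S' x))
  have hGc : ContinuousOn G (Icc a b) :=
    (hg'c.mul (hSc.norm.pow 2)).add (hgc.mul (continuousOn_const.mul (hSc.inner hS'c)))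
  have hFTC : ∫ x in a..b, G x = g b * ‖S b‖ ^ 2 - g a * ‖S a‖ ^ 2 :=
    intervalIntegral.integral_eq_sub_of_hasDerivAt
      (fun x hx => (hg x (uIcc_of_le hab ▸ hx)).mul (hS x (uIcc_of_le hab ▸ hx)).norm_sq)
      (hGc.intervalIntegrable_of_Icc hab)
  have hpointwise : ∀ x ∈ Icc a b,
      -G x ≤ Mg' * ‖S x‖ ^ 2 + 2 * Mg * (‖S x‖ * ‖S' x‖) := by
    intro x hx
    have h₁ : -g' x * ‖S x‖ ^ 2 ≤ Mg' * ‖S x‖ ^ 2 :=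
      mul_le_mul_of_nonneg_right ((neg_le_abs _).trans (hMg' x hx)) (sq_nonneg _)
    have h₂ : -(g x * (2 * inner ℝ (S x) (S' x))) ≤ Mg * (2 * (‖S x‖ * ‖S' x‖)) := by
      refine (neg_le_abs _).trans ?_
      rw [abs_mul, abs_mul, abs_two]
      exact mul_le_mul (hMg x hx) (by gcongr; exact abs_real_inner_le_norm _ _)
        (by positivity) ((abs_nonneg _).trans (hMg x hx))
    linarith
  have hS2c : ContinuousOn (fun x => ‖S x‖ ^ 2) (Icc a b) := hSc.norm.pow 2
  have hSS'c : ContinuousOn (fun x => ‖S x‖ * ‖S' x‖) (Icc a b) := hSc.norm.mul hS'c.norm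
  calc ‖S b‖ ^ 2 + ‖S a‖ ^ 2 = ∫ x in a..b, -G x := by
        rw [intervalIntegral.integral_neg, hFTC, hga, hgb]; ring
    _ ≤ ∫ x in a..b, (Mg' * ‖S x‖ ^ 2 + 2 * Mg * (‖S x‖ * ‖S' x‖)) :=
        intervalIntegral.integral_mono_on hab (hGc.neg.intervalIntegrable_of_Icc hab)
          (((continuousOn_const.mul hS2c).add
            (continuousOn_const.mul hSS'c)).intervalIntegrable_of_Icc hab) hpointwise
    _ = Mg' * (∫ x in a..b, ‖S x‖ ^ 2) + 2 * Mg * ∫ x in a..b, ‖S x‖ * ‖S' x‖ := by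
        rw [intervalIntegral.integral_add
            ((hS2c.intervalIntegrable_of_Icc hab).const_mul _)
            ((hSS'c.intervalIntegrable_of_Icc hab).const_mul _),
          intervalIntegral.integral_const_mul, intervalIntegral.integral_const_mul]

theorem stmt_8_general (α β lam c₀ Mg Mg' : ℝ) (hαβ : α < β) (hc₀ : 0 < c₀)
    (g g' : ℝ → ℝ)
    (hg : ∀ x ∈ Set.Icc α β, HasDerivAt g (g' x) x)
    (hg'c : ContinuousOn g' (Set.Icc α β))
    (hgα : g α = 1) (hgβ : g β = -1)
    (hMg : IsGreatest ((fun x => |g x|) '' Set.Icc α β) Mg)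
    (hMg' : IsGreatest ((fun x => |g' x|) '' Set.Icc α β) Mg')
    (S S' v z f : ℝ → ℂ)
    (hS : ∀ x ∈ Set.Icc α β, HasDerivAt S (S' x) x)
    (hS'c : ContinuousOn S' (Set.Icc α β))
    (hvc : ContinuousOn v (Set.Icc α β))
    (hzc : ContinuousOn z (Set.Icc α β))
    (hfc : ContinuousOn f (Set.Icc α β))
    (heq : ∀ x ∈ Set.Ioo α β,
      Complex.I * (lam : ℂ) * v x - S' x + (c₀ : ℂ) * z x = f x) :
    ‖S β‖ ^ 2 + ‖S α‖ ^ 2 ≤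
      Mg' * (∫ x in α..β, ‖S x‖ ^ 2)
        + 2 * |lam| * Mg * Real.sqrt (∫ x in α..β, ‖S x‖ ^ 2)
            * Real.sqrt (∫ x in α..β, ‖v x‖ ^ 2)
        + 2 * c₀ * Mg * Real.sqrt (∫ x in α..β, ‖S x‖ ^ 2)
            * Real.sqrt (∫ x in α..β, ‖z x‖ ^ 2)
        + 2 * Mg * Real.sqrt (∫ x in α..β, ‖S x‖ ^ 2)
            * Real.sqrt (∫ x in α..β, ‖f x‖ ^ 2) := by
  have hab := hαβ.le
  have hSc : ContinuousOn S (Icc α β) := fun x hx => (hS x hx).continuousAt.continuousWithinAt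
  have hMg0 : 0 ≤ 2 * Mg := by
    have := (abs_nonneg _).trans (hMg.2 ⟨α, left_mem_Icc.2 hab, rfl⟩); linarith
  have hII {w : ℝ → ℂ} (hw : ContinuousOn w (Icc α β)) :
      IntervalIntegrable (fun x => ‖S x‖ * ‖w x‖) volume α β :=
    (hSc.norm.mul hw.norm).intervalIntegrable_of_Icc hab
  have hSS' : ∫ x in α..β, ‖S x‖ * ‖S' x‖ ≤ |lam| * (∫ x in α..β, ‖S x‖ * ‖v x‖)
      + c₀ * (∫ x in α..β, ‖S x‖ * ‖z x‖) + ∫ x in α..β, ‖S x‖ * ‖f x‖ := by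
    rw [← intervalIntegral.integral_const_mul, ← intervalIntegral.integral_const_mul,
      ← intervalIntegral.integral_add ((hII hvc).const_mul _) ((hII hzc).const_mul _),
      ← intervalIntegral.integral_add (((hII hvc).const_mul _).add ((hII hzc).const_mul _))
        (hII hfc)]
    refine intervalIntegral.integral_mono_on_of_le_Ioo hab (hII hS'c)
      ((((hII hvc).const_mul _).add ((hII hzc).const_mul _)).add (hII hfc)) fun x hx => ?_
    have := norm_le_of_resolvent_eq hc₀.le (heq x hx)
    nlinarith [norm_nonneg (S x)]
  calc ‖S β‖ ^ 2 + ‖S α‖ ^ 2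
      ≤ Mg' * (∫ x in α..β, ‖S x‖ ^ 2) + 2 * Mg * ∫ x in α..β, ‖S x‖ * ‖S' x‖ :=
        norm_sq_add_norm_sq_le_of_multiplier hab hg hg'c hgα hgβ
          (fun x hx => hMg.2 ⟨x, hx, rfl⟩) (fun x hx => hMg'.2 ⟨x, hx, rfl⟩) hS hS'c
    _ ≤ Mg' * (∫ x in α..β, ‖S x‖ ^ 2) + 2 * Mg *
          (|lam| * (√(∫ x in α..β, ‖S x‖ ^ 2) * √(∫ x in α..β, ‖v x‖ ^ 2))
            + c₀ * (√(∫ x in α..β, ‖S x‖ ^ 2) * √(∫ x in α..β, ‖z x‖ ^ 2))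
            + √(∫ x in α..β, ‖S x‖ ^ 2) * √(∫ x in α..β, ‖f x‖ ^ 2)) := by
        gcongr _ + _ * ?_
        refine hSS'.trans ?_
        gcongr <;> exact intervalIntegral_norm_mul_norm_le hab hSc ‹_›
    _ = _ := by ring

/-- Boundary-trace estimate for the total stress `S` from the resolvent equation
`iλv − S′ + c₀z = f` on `(α,β)`, via the multiplier `2 g S̄`. -/
theorem stmt_8 (α β lam c₀ Mg Mg' : ℝ) (hα : 0 < α) (hαβ : α < β) (hc₀ : 0 < c₀)
    (g g' : ℝ → ℝ)
    (hg : ∀ x ∈ Set.Icc α β, HasDerivAt g (g' x) x)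
    (hg'c : ContinuousOn g' (Set.Icc α β))
    (hgα : g α = 1) (hgβ : g β = -1)
    (hMg : IsGreatest ((fun x => |g x|) '' Set.Icc α β) Mg)
    (hMg' : IsGreatest ((fun x => |g' x|) '' Set.Icc α β) Mg')
    (S S' v z f : ℝ → ℂ)
    (hS : ∀ x ∈ Set.Icc α β, HasDerivAt S (S' x) x)
    (hS'c : ContinuousOn S' (Set.Icc α β))
    (hvc : ContinuousOn v (Set.Icc α β))
    (hzc : ContinuousOn z (Set.Icc α β))
    (hfc : ContinuousOn f (Set.Icc α β))
    (heq : ∀ x ∈ Set.Ioo α β,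
      Complex.I * (lam : ℂ) * v x - S' x + (c₀ : ℂ) * z x = f x) :
    ‖S β‖ ^ 2 + ‖S α‖ ^ 2 ≤
      Mg' * (∫ x in α..β, ‖S x‖ ^ 2)
        + 2 * |lam| * Mg * Real.sqrt (∫ x in α..β, ‖S x‖ ^ 2)
            * Real.sqrt (∫ x in α..β, ‖v x‖ ^ 2)
        + 2 * c₀ * Mg * Real.sqrt (∫ x in α..β, ‖S x‖ ^ 2)
            * Real.sqrt (∫ x in α..β, ‖z x‖ ^ 2)
        + 2 * Mg * Real.sqrt (∫ x in α..β, ‖S x‖ ^ 2)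
            * Real.sqrt (∫ x in α..β, ‖f x‖ ^ 2) :=
  stmt_8_general α β lam c₀ Mg Mg' hαβ hc₀ g g' hg hg'c hgα hgβ hMg hMg' S S' v z f hS hS'c hvc hzc
    hfc heq
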